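/- Let H be a real Hilbert space and C a nonempty closed convex subset of H. Let T_1,…,T_N : C → C be asymptotically quasi-nonexpansive mappings with a common sequence {k_n} ⊂ [1,∞), k_n → 1, each uniformly L-Lipschitz, and suppose F = ⋂_{i=1}^N F(T_i) is nonempty and bounded, say F ⊆ {u ∈ C : ‖u‖ ≤ ω} for some ω > 0. For n ≥ 1 write n = (p_n − 1)N + j_n with j_n ∈ {1,…,N} (i.e. j_n = ((n−1) mod N) + 1 and p_n = ⌊(n−1)/N⌋ + 1). Let {α_n} ⊂ [0,1] with α_n → 0, and set ε_n = (k_{p_n} − 1)(ω + ‖x_n‖)². Let {x_n} be generated by: x_1 ∈ C, C_1 = Q_1 = C; y_n = α_n x_1 + (1 − α_n) T_{j_n}^{p_n} x_n; C_n = {v ∈ C : ‖v − y_n‖² ≤ α_n‖v − x_1‖² + (1 − α_n)‖v − x_n‖² + ε_n}; Q_n = {v ∈ Q_{n−1} : ⟨x_1 − x_n, x_n − v⟩ ≥ 0} for n ≥ 2; and x_{n+1} is the metric projection of x_1 onto C_n ∩ Q_n. Then {x_n} converges strongly to the metric projection of x_1 onto F. -/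

import Mathlib

/-!
Every `u ∈ F` lies in `Cₙ` (asymptotic quasi-nonexpansiveness plus `‖u‖ ≤ ω` absorb the error
into `εₙ`) and, by the variational inequality of the projection `xₙ₊₁`, in `Qₙ₊₁`. The sets `Qₙ`
are nested, so `‖x₁ - xₙ‖` increases, is bounded by `‖x₁ - z‖` for `z ∈ F`, and the Pythagorean
inequality `‖x₁ - xₙ‖² + ‖xₙ - xₘ‖² ≤ ‖x₁ - xₘ‖²` (for `n ≤ m`) makes `(xₙ)` Cauchy, with limit `q`.
Because `xₙ₊₁ ∈ Cₙ` and `αₙ, εₙ → 0`, also `yₙ → q` and hence `T_{jₙ}^{pₙ} xₙ → q`. Along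
`n = m N + i + 1` this reads `T_i^{m+1} xₙ → q`, so by uniform Lipschitz continuity
`T_i^{m+1} q → q`, which forces `T_i q = q`.
-/

open Filter Topology RealInnerProductSpace

section

variable {H : Type*} [NormedAddCommGroup H]

def UniformlyLipschitzOn (T : H → H) (C : Set H) (L : ℝ) : Prop :=
  ∀ n, 1 ≤ n → ∀ x ∈ C, ∀ y ∈ C, ‖T^[n] x - T^[n] y‖ ≤ L * ‖x - y‖

lemma norm_sub_convexComb_sq_le [NormedSpace ℝ H] {p u v w : H} {a κ ω : ℝ} (ha₀ : 0 ≤ a)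
    (ha₁ : a ≤ 1) (hκ : 1 ≤ κ) (hw : ‖p - w‖ ^ 2 ≤ κ * ‖p - v‖ ^ 2) (hp : ‖p‖ ≤ ω) :
    ‖p - (a • u + (1 - a) • w)‖ ^ 2 ≤
      a * ‖p - u‖ ^ 2 + (1 - a) * ‖p - v‖ ^ 2 + (κ - 1) * (ω + ‖v‖) ^ 2 := by
  have hconv : ‖p - (a • u + (1 - a) • w)‖ ^ 2 ≤ a * ‖p - u‖ ^ 2 + (1 - a) * ‖p - w‖ ^ 2 := by
    have hsplit : p - (a • u + (1 - a) • w) = a • (p - u) + (1 - a) • (p - w) := by module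
    rw [hsplit]
    exact (convexOn_univ_norm.pow (fun _ _ => norm_nonneg _) 2).2 trivial trivial
      ha₀ (sub_nonneg.2 ha₁) (by ring)
  have hpv : ‖p - v‖ ^ 2 ≤ (ω + ‖v‖) ^ 2 :=
    pow_le_pow_left₀ (norm_nonneg _) ((norm_sub_le _ _).trans (by linarith)) 2
  have hκ₀ : 0 ≤ κ - 1 := sub_nonneg.2 hκ
  nlinarith [mul_le_mul_of_nonneg_left hw (sub_nonneg.2 ha₁), mul_le_mul_of_nonneg_left hpv hκ₀,
    mul_nonneg (mul_nonneg ha₀ hκ₀) (sq_nonneg ‖p - v‖)]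

lemma convex_setOf_norm_sub_sq_le [InnerProductSpace ℝ H] (y u w : H) (a ε : ℝ) :
    Convex ℝ {v : H | ‖v - y‖ ^ 2 ≤ a * ‖v - u‖ ^ 2 + (1 - a) * ‖v - w‖ ^ 2 + ε} := by
  -- the quadratic terms in `v` cancel, so this is a half-space
  have hhalf : ∀ v : H, ‖v - y‖ ^ 2 ≤ a * ‖v - u‖ ^ 2 + (1 - a) * ‖v - w‖ ^ 2 + ε ↔
      innerₛₗ ℝ (a • u + (1 - a) • w - y) v ≤
        (ε + a * ‖u‖ ^ 2 + (1 - a) * ‖w‖ ^ 2 - ‖y‖ ^ 2) / 2 := by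
    intro v
    rw [innerₛₗ_apply_apply, inner_sub_left, inner_add_left, real_inner_smul_left,
      real_inner_smul_left, norm_sub_sq_real, norm_sub_sq_real, norm_sub_sq_real,
      real_inner_comm y, real_inner_comm u, real_inner_comm w]
    constructor <;> intro h <;> linarith
  simp_rw [hhalf]
  exact convex_halfSpace_le (innerₛₗ ℝ _).isLinear _

lemma convex_setOf_inner_sub_nonneg [InnerProductSpace ℝ H] (a b : H) :
    Convex ℝ {v : H | 0 ≤ ⟪a, b - v⟫} := by
  simp_rw [inner_sub_right, sub_nonneg]
  exact convex_halfSpace_le (innerₛₗ ℝ a).isLinear _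

lemma real_inner_sub_nonpos_of_forall_norm_sub_le [InnerProductSpace ℝ H] {K : Set H}
    (hK : Convex ℝ K) {u z : H} (hz : z ∈ K) (hmin : ∀ v ∈ K, ‖z - u‖ ≤ ‖v - u‖) :
    ∀ v ∈ K, ⟪u - z, v - z⟫ ≤ 0 := by
  have : Nonempty K := ⟨⟨z, hz⟩⟩
  have hbdd : BddBelow (Set.range fun v : K => ‖u - (v : H)‖) :=
    ⟨0, by rintro _ ⟨v, rfl⟩; exact norm_nonneg _⟩
  refine (norm_eq_iInf_iff_real_inner_le_zero hK hz).1 (le_antisymm ?_ (ciInf_le hbdd ⟨z, hz⟩))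
  exact le_ciInf fun v => by simpa only [norm_sub_rev u] using hmin v v.2

lemma norm_sub_sq_add_norm_sub_sq_le [InnerProductSpace ℝ H] {u z v : H}
    (h : 0 ≤ ⟪u - z, z - v⟫) : ‖u - z‖ ^ 2 + ‖z - v‖ ^ 2 ≤ ‖u - v‖ ^ 2 := by
  have hsum := norm_add_sq_real (u - z) (z - v)
  rw [sub_add_sub_cancel] at hsum
  linarith

lemma cauchySeq_of_norm_sub_sq_add_le {u : ℕ → H} {w : H} {D : ℝ} (hD : ∀ n, ‖w - u n‖ ≤ D)
    (h : ∀ n m, n ≤ m → ‖w - u n‖ ^ 2 + ‖u n - u m‖ ^ 2 ≤ ‖w - u m‖ ^ 2) : CauchySeq u := by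
  set b : ℕ → ℝ := fun n => ‖w - u n‖ ^ 2
  have hmono : Monotone b := fun n m hnm => by
    linarith [h n m hnm, sq_nonneg ‖u n - u m‖]
  have hbdd : BddAbove (Set.range b) := ⟨D ^ 2, by
    rintro _ ⟨n, rfl⟩; exact pow_le_pow_left₀ (norm_nonneg _) (hD n) 2⟩
  have hb : CauchySeq b := (tendsto_atTop_ciSup hmono hbdd).cauchySeq
  rw [Metric.cauchySeq_iff']
  intro ε hε
  obtain ⟨N, hN⟩ := Metric.cauchySeq_iff'.1 hb (ε ^ 2) (by positivity)
  refine ⟨N, fun n hn => ?_⟩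
  have hgap := hN n hn
  rw [Real.dist_eq, abs_of_nonneg (sub_nonneg.2 (hmono hn))] at hgap
  have hsq : ‖u N - u n‖ ^ 2 < ε ^ 2 := by linarith [h N n hn]
  rw [dist_eq_norm, norm_sub_rev]
  exact (pow_lt_pow_iff_left₀ (norm_nonneg _) hε.le two_ne_zero).1 hsq

section HybridProjection

variable [InnerProductSpace ℝ H] {x : ℕ → H} {CS QS : ℕ → Set H} {F : Set H}

lemma subset_of_le_of_hybrid
    (hQS : ∀ n, 1 ≤ n → QS (n + 1) = {v ∈ QS n | 0 ≤ ⟪x 1 - x (n + 1), x (n + 1) - v⟫}) :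
    ∀ n m, 1 ≤ n → n ≤ m → QS m ⊆ QS n := by
  intro n m hn hnm
  induction m, hnm using Nat.le_induction with
  | base => exact subset_rfl
  | succ m hnm ih =>
    intro v hv
    rw [hQS m (hn.trans hnm)] at hv
    exact ih hv.1

lemma convex_and_subset_of_hybrid (hQ₁ : Convex ℝ (QS 1)) (hFQ₁ : F ⊆ QS 1)
    (hCSconv : ∀ n, 1 ≤ n → Convex ℝ (CS n)) (hFCS : ∀ n, 1 ≤ n → F ⊆ CS n)
    (hQS : ∀ n, 1 ≤ n → QS (n + 1) = {v ∈ QS n | 0 ≤ ⟪x 1 - x (n + 1), x (n + 1) - v⟫})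
    (hproj : ∀ n, 1 ≤ n → x (n + 1) ∈ CS n ∩ QS n ∧
      ∀ v ∈ CS n ∩ QS n, ‖x (n + 1) - x 1‖ ≤ ‖v - x 1‖) :
    ∀ n, 1 ≤ n → Convex ℝ (QS n) ∧ F ⊆ QS n := by
  intro n hn
  induction n, hn using Nat.le_induction with
  | base => exact ⟨hQ₁, hFQ₁⟩
  | succ n hn ih =>
    rw [hQS n hn]
    refine ⟨ih.1.inter (convex_setOf_inner_sub_nonneg _ _), fun u hu => ⟨ih.2 hu, ?_⟩⟩
    have hvar := real_inner_sub_nonpos_of_forall_norm_sub_le ((hCSconv n hn).inter ih.1)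
      (hproj n hn).1 (hproj n hn).2 u ⟨hFCS n hn hu, ih.2 hu⟩
    rw [← neg_sub u, inner_neg_right]
    linarith

theorem exists_tendsto_of_hybrid [CompleteSpace H] (hFne : F.Nonempty)
    (hQ₁ : Convex ℝ (QS 1)) (hFQ₁ : F ⊆ QS 1)
    (hCSconv : ∀ n, 1 ≤ n → Convex ℝ (CS n)) (hFCS : ∀ n, 1 ≤ n → F ⊆ CS n)
    (hQS : ∀ n, 1 ≤ n → QS (n + 1) = {v ∈ QS n | 0 ≤ ⟪x 1 - x (n + 1), x (n + 1) - v⟫})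
    (hproj : ∀ n, 1 ≤ n → x (n + 1) ∈ CS n ∩ QS n ∧
      ∀ v ∈ CS n ∩ QS n, ‖x (n + 1) - x 1‖ ≤ ‖v - x 1‖) :
    ∃ q, Tendsto x atTop (𝓝 q) ∧ ∀ v ∈ F, ‖q - x 1‖ ≤ ‖v - x 1‖ := by
  have hmin : ∀ n, ∀ v ∈ F, ‖x (n + 2) - x 1‖ ≤ ‖v - x 1‖ := fun n v hv =>
    (hproj (n + 1) (by omega)).2 v
      ⟨hFCS _ (by omega) hv, (convex_and_subset_of_hybrid hQ₁ hFQ₁ hCSconv hFCS hQS hproj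
        (n + 1) (by omega)).2 hv⟩
  have hmemQ : ∀ n m, n ≤ m → x (m + 2) ∈ QS (n + 2) := by
    intro n m hnm
    rcases hnm.eq_or_lt with rfl | hlt
    · rw [hQS (n + 1) (by omega)]
      exact ⟨(hproj (n + 1) (by omega)).1.2, by simp⟩
    · exact subset_of_le_of_hybrid hQS (n + 2) (m + 1) (by omega) (by omega)
        (hproj (m + 1) (by omega)).1.2
  obtain ⟨z, hz⟩ := hFne
  have hcauchy : CauchySeq fun n => x (n + 2) := by
    refine cauchySeq_of_norm_sub_sq_add_le (w := x 1) (D := ‖z - x 1‖)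
      (fun n => by rw [norm_sub_rev]; exact hmin n z hz) fun n m hnm => ?_
    have hm := hmemQ n m hnm
    rw [hQS (n + 1) (by omega)] at hm
    exact norm_sub_sq_add_norm_sub_sq_le hm.2
  obtain ⟨q, hq⟩ := cauchySeq_tendsto_of_complete hcauchy
  exact ⟨q, (tendsto_add_atTop_iff_nat 2).1 hq, fun v hv =>
    le_of_tendsto ((hq.sub_const (x 1)).norm) (Eventually.of_forall fun n => hmin n v hv)⟩

end HybridProjection

lemma tendsto_of_norm_sub_sq_le {x y : ℕ → H} {a ε : ℕ → ℝ} {q u : H}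
    (hx : Tendsto x atTop (𝓝 q)) (ha : Tendsto a atTop (𝓝 0)) (hε : Tendsto ε atTop (𝓝 0))
    (h : ∀ᶠ n in atTop,
      ‖x (n + 1) - y n‖ ^ 2 ≤ a n * ‖x (n + 1) - u‖ ^ 2 + (1 - a n) * ‖x (n + 1) - x n‖ ^ 2 + ε n) :
    Tendsto y atTop (𝓝 q) := by
  have hx₁ : Tendsto (fun n => x (n + 1)) atTop (𝓝 q) := (tendsto_add_atTop_iff_nat 1).2 hx
  have hbound : Tendsto (fun n => a n * ‖x (n + 1) - u‖ ^ 2 +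
      (1 - a n) * ‖x (n + 1) - x n‖ ^ 2 + ε n) atTop (𝓝 0) := by
    simpa using ((ha.mul ((hx₁.sub_const u).norm.pow 2)).add
      (((tendsto_const_nhds.sub ha).mul ((hx₁.sub hx).norm.pow 2)))).add hε
  have hsq : Tendsto (fun n => ‖x (n + 1) - y n‖ ^ 2) atTop (𝓝 0) :=
    squeeze_zero' (Eventually.of_forall fun _ => sq_nonneg _) h hbound
  have hdiff : Tendsto (fun n => x (n + 1) - y n) atTop (𝓝 0) := by
    rw [tendsto_zero_iff_norm_tendsto_zero]
    simpa [Real.sqrt_sq (norm_nonneg _)] using hsq.sqrt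
  simpa using hx₁.sub hdiff

lemma tendsto_of_convexComb [NormedSpace ℝ H] {y w : ℕ → H} {α : ℕ → ℝ} {u q : H}
    (hα : Tendsto α atTop (𝓝 0)) (hy : ∀ᶠ n in atTop, y n = α n • u + (1 - α n) • w n)
    (hyq : Tendsto y atTop (𝓝 q)) :
    Tendsto w atTop (𝓝 q) := by
  have hlim : Tendsto (fun n => (1 - α n)⁻¹ • (y n - α n • u)) atTop (𝓝 q) := by
    simpa using ((tendsto_const_nhds.sub hα).inv₀ (by norm_num : (1 : ℝ) - 0 ≠ 0)).smul
      (hyq.sub (hα.smul_const u))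
  refine hlim.congr' ?_
  filter_upwards [hy, hα.eventually_lt_const one_pos] with n hn hα₁
  rw [hn, add_sub_cancel_left, smul_smul, inv_mul_cancel₀ (sub_ne_zero.2 hα₁.ne'), one_smul]

namespace UniformlyLipschitzOn

variable {T : H → H} {C : Set H} {L : ℝ} {q : H}

lemma tendsto_iterate_of_tendsto (hT : UniformlyLipschitzOn T C L) {u : ℕ → H}
    (huC : ∀ m, u m ∈ C) (hqC : q ∈ C) (hu : Tendsto u atTop (𝓝 q))
    (hTu : Tendsto (fun m => T^[m + 1] (u m)) atTop (𝓝 q)) :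
    Tendsto (fun m => T^[m + 1] q) atTop (𝓝 q) := by
  have hclose : Tendsto (fun m => T^[m + 1] q - T^[m + 1] (u m)) atTop (𝓝 0) := by
    rw [tendsto_zero_iff_norm_tendsto_zero]
    refine squeeze_zero (fun _ => norm_nonneg _)
      (fun m => hT (m + 1) (by omega) q hqC (u m) (huC m)) ?_
    simpa using ((tendsto_const_nhds (x := q)).sub hu).norm.const_mul L
  simpa using hclose.add hTu

lemma isFixedPt_of_tendsto_iterate (hT : UniformlyLipschitzOn T C L) (hmaps : Set.MapsTo T C C)
    (hqC : q ∈ C) (h : Tendsto (fun m => T^[m + 1] q) atTop (𝓝 q)) : Function.IsFixedPt T q := by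
  have hnext : Tendsto (fun m => T (T^[m + 1] q)) atTop (𝓝 (T q)) := by
    rw [tendsto_iff_norm_sub_tendsto_zero]
    refine squeeze_zero (fun _ => norm_nonneg _)
      (fun m => hT 1 le_rfl _ (hmaps.iterate _ hqC) q hqC) ?_
    simpa using (h.sub_const q).norm.const_mul L
  refine tendsto_nhds_unique hnext ?_
  simpa only [← Function.iterate_succ_apply' T] using (tendsto_add_atTop_iff_nat 1).2 h

end UniformlyLipschitzOn

lemma cyclic_index (N m : ℕ) (i : Fin N) :
    (m * N + i + 1 - 1) % N = i ∧ (m * N + i + 1 - 1) / N + 1 = m + 1 := by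
  have hN : 0 < N := i.pos
  rw [Nat.add_sub_cancel, Nat.add_comm, Nat.add_mul_div_right _ _ hN, Nat.div_eq_of_lt i.isLt]
  simp [Nat.mod_eq_of_lt i.isLt]

lemma isFixedPt_of_tendsto_cyclic_iterate {N : ℕ} (hN : 0 < N) {T : Fin N → H → H} {C : Set H}
    {L : ℝ} (hmaps : ∀ i, Set.MapsTo (T i) C C) (hT : ∀ i, UniformlyLipschitzOn (T i) C L)
    {x : ℕ → H} {q : H} (hxC : ∀ n, 1 ≤ n → x n ∈ C) (hqC : q ∈ C) (hx : Tendsto x atTop (𝓝 q))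
    (hTx : Tendsto (fun n => (T ⟨(n - 1) % N, Nat.mod_lt _ hN⟩)^[(n - 1) / N + 1] (x n))
      atTop (𝓝 q)) (i : Fin N) : Function.IsFixedPt (T i) q := by
  set s : ℕ → ℕ := fun m => m * N + i + 1
  have hs : Tendsto s atTop atTop :=
    tendsto_atTop_mono (fun m => by
      have := Nat.le_mul_of_pos_right m hN; simp only [s, id]; omega) tendsto_id
  have hTs : Tendsto (fun m => (T i)^[m + 1] (x (s m))) atTop (𝓝 q) := by
    refine (hTx.comp hs).congr fun m => ?_
    obtain ⟨hj, hp⟩ := cyclic_index N m i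
    simp only [Function.comp_apply, s, hp]
    congr 3
  exact (hT i).isFixedPt_of_tendsto_iterate (hmaps i) hqC <|
    (hT i).tendsto_iterate_of_tendsto (fun m => hxC (s m) (Nat.le_add_left 1 _)) hqC
      (hx.comp hs) hTs

end

-- `T ⟨(n - 1) % N, _⟩` is `T_{jₙ}` (indices shifted into `Fin N`) and `(n - 1) / N + 1` is `pₙ`.
theorem stmt_6_general
    {H : Type*} [NormedAddCommGroup H] [InnerProductSpace ℝ H] [CompleteSpace H]
    (C : Set H) (hCcl : IsClosed C) (hCcv : Convex ℝ C)
    (N : ℕ) (hN : 0 < N) (T : Fin N → H → H) (hTmaps : ∀ i, Set.MapsTo (T i) C C)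
    (k : ℕ → ℝ) (hk : ∀ n, 1 ≤ k n) (hklim : Tendsto k atTop (𝓝 1))
    (hAQN : ∀ i, ∀ n, 1 ≤ n → ∀ p ∈ C, T i p = p →
      ∀ x ∈ C, ‖p - (T i)^[n] x‖ ^ 2 ≤ k n * ‖p - x‖ ^ 2)
    (L : ℝ)
    (hLip : ∀ i, ∀ n, 1 ≤ n → ∀ x ∈ C, ∀ y ∈ C,
      ‖(T i)^[n] x - (T i)^[n] y‖ ≤ L * ‖x - y‖)
    (F : Set H) (hF : F = ⋂ i, {x ∈ C | T i x = x}) (hFne : F.Nonempty)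
    (ω : ℝ) (hFbdd : ∀ u ∈ F, ‖u‖ ≤ ω)
    (α : ℕ → ℝ) (hα : ∀ n, α n ∈ Set.Icc (0 : ℝ) 1) (hαlim : Tendsto α atTop (𝓝 0))
    (x : ℕ → H) (y : ℕ → H) (CS QS : ℕ → Set H)
    (hx1 : x 1 ∈ C) (hQS1 : QS 1 = C)
    (hy : ∀ n, 1 ≤ n →
      y n = α n • x 1 +
        (1 - α n) • (T ⟨(n - 1) % N, Nat.mod_lt _ hN⟩)^[(n - 1) / N + 1] (x n))
    (hCS : ∀ n, 1 ≤ n → CS n =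
      {v ∈ C | ‖v - y n‖ ^ 2 ≤ α n * ‖v - x 1‖ ^ 2 + (1 - α n) * ‖v - x n‖ ^ 2 +
        (k ((n - 1) / N + 1) - 1) * (ω + ‖x n‖) ^ 2})
    (hQS : ∀ n, 1 ≤ n → QS (n + 1) =
      {v ∈ QS n | 0 ≤ (inner ℝ (x 1 - x (n + 1)) (x (n + 1) - v) : ℝ)})
    (hproj : ∀ n, 1 ≤ n → x (n + 1) ∈ CS n ∩ QS n ∧
      ∀ v ∈ CS n ∩ QS n, ‖x (n + 1) - x 1‖ ≤ ‖v - x 1‖) :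
    ∃ z ∈ F, (∀ v ∈ F, ‖z - x 1‖ ≤ ‖v - x 1‖) ∧ Tendsto x atTop (𝓝 z) := by
  have hFfix : ∀ u ∈ F, ∀ i, u ∈ C ∧ T i u = u := fun u hu i => by
    rw [hF] at hu; exact Set.mem_iInter.1 hu i
  have hxC : ∀ n, 1 ≤ n → x n ∈ C
    | 1, _ => hx1
    | n + 2, _ => by
      have hmem := (hproj (n + 1) (by omega)).1.1
      rw [hCS (n + 1) (by omega)] at hmem
      exact hmem.1
  have hFCS : ∀ n, 1 ≤ n → F ⊆ CS n := fun n hn u hu => by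
    obtain ⟨huC, hufix⟩ := hFfix u hu ⟨(n - 1) % N, Nat.mod_lt _ hN⟩
    rw [hCS n hn, hy n hn]
    exact ⟨huC, norm_sub_convexComb_sq_le (hα n).1 (hα n).2 (hk _)
      (hAQN _ _ (Nat.le_add_left 1 _) u huC hufix (x n) (hxC n hn)) (hFbdd u hu)⟩
  obtain ⟨q, hxq, hqmin⟩ := exists_tendsto_of_hybrid hFne (hQS1 ▸ hCcv)
    (fun u hu => hQS1 ▸ (hFfix u hu ⟨0, hN⟩).1)
    (fun n hn => hCS n hn ▸ hCcv.inter (convex_setOf_norm_sub_sq_le _ _ _ _ _)) hFCS hQS hproj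
  have hqC : q ∈ C := hCcl.mem_of_tendsto hxq ((eventually_ge_atTop 1).mono hxC)
  have hp : Tendsto (fun n => (n - 1) / N + 1) atTop atTop := (tendsto_add_atTop_nat 1).comp
    ((Nat.tendsto_div_const_atTop hN.ne').comp (tendsto_sub_atTop_nat 1))
  have hε : Tendsto (fun n => (k ((n - 1) / N + 1) - 1) * (ω + ‖x n‖) ^ 2) atTop (𝓝 0) := by
    simpa using ((hklim.comp hp).sub_const 1).mul ((tendsto_const_nhds.add hxq.norm).pow 2)
  have hyq : Tendsto y atTop (𝓝 q) := tendsto_of_norm_sub_sq_le hxq hαlim hε <|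
    (eventually_ge_atTop 1).mono fun n hn => by
      have hmem := (hproj n hn).1.1
      rw [hCS n hn] at hmem
      exact hmem.2
  have hTxq := tendsto_of_convexComb hαlim ((eventually_ge_atTop 1).mono hy) hyq
  refine ⟨q, hF ▸ Set.mem_iInter.2 fun i => ⟨hqC, ?_⟩, hqmin, hxq⟩
  exact isFixedPt_of_tendsto_cyclic_iterate hN hTmaps hLip hxC hqC hxq hTxq i

/-- Sequential hybrid method for a finite family of asymptotically quasi-nonexpansive
mappings in a real Hilbert space (Theorem 3.11, Hilbert-space form). For `n ≥ 1` we
write `n = (pₙ - 1) N + jₙ` with `jₙ = ((n-1) % N) + 1` and `pₙ = (n-1)/N + 1`; the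
mapping `T_{jₙ}` is represented by `T ⟨(n-1) % N, _⟩` and the power `pₙ` by
`(n-1)/N + 1`. -/
theorem stmt_6
    {H : Type*} [NormedAddCommGroup H] [InnerProductSpace ℝ H] [CompleteSpace H]
    (C : Set H) (hCne : C.Nonempty) (hCcl : IsClosed C) (hCcv : Convex ℝ C)
    (N : ℕ) (hN : 0 < N) (T : Fin N → H → H) (hTmaps : ∀ i, Set.MapsTo (T i) C C)
    (k : ℕ → ℝ) (hk : ∀ n, 1 ≤ k n) (hklim : Tendsto k atTop (𝓝 1))
    (hAQN : ∀ i, ∀ n, 1 ≤ n → ∀ p ∈ C, T i p = p →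
      ∀ x ∈ C, ‖p - (T i)^[n] x‖ ^ 2 ≤ k n * ‖p - x‖ ^ 2)
    (L : ℝ)
    (hLip : ∀ i, ∀ n, 1 ≤ n → ∀ x ∈ C, ∀ y ∈ C,
      ‖(T i)^[n] x - (T i)^[n] y‖ ≤ L * ‖x - y‖)
    (F : Set H) (hF : F = ⋂ i, {x ∈ C | T i x = x}) (hFne : F.Nonempty)
    (ω : ℝ) (hω : 0 < ω) (hFbdd : ∀ u ∈ F, ‖u‖ ≤ ω)
    (α : ℕ → ℝ) (hα : ∀ n, α n ∈ Set.Icc (0 : ℝ) 1) (hαlim : Tendsto α atTop (𝓝 0))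
    (x : ℕ → H) (y : ℕ → H) (CS QS : ℕ → Set H)
    (hx1 : x 1 ∈ C) (hQS1 : QS 1 = C)
    (hy : ∀ n, 1 ≤ n →
      y n = α n • x 1 +
        (1 - α n) • (T ⟨(n - 1) % N, Nat.mod_lt _ hN⟩)^[(n - 1) / N + 1] (x n))
    (hCS : ∀ n, 1 ≤ n → CS n =
      {v ∈ C | ‖v - y n‖ ^ 2 ≤ α n * ‖v - x 1‖ ^ 2 + (1 - α n) * ‖v - x n‖ ^ 2 +
        (k ((n - 1) / N + 1) - 1) * (ω + ‖x n‖) ^ 2})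
    (hQS : ∀ n, 1 ≤ n → QS (n + 1) =
      {v ∈ QS n | 0 ≤ (inner ℝ (x 1 - x (n + 1)) (x (n + 1) - v) : ℝ)})
    (hproj : ∀ n, 1 ≤ n → x (n + 1) ∈ CS n ∩ QS n ∧
      ∀ v ∈ CS n ∩ QS n, ‖x (n + 1) - x 1‖ ≤ ‖v - x 1‖) :
    ∃ z ∈ F, (∀ v ∈ F, ‖z - x 1‖ ≤ ‖v - x 1‖) ∧ Tendsto x atTop (𝓝 z) :=
  stmt_6_general C hCcl hCcv N hN T hTmaps k hk hklim hAQN L hLip F hF hFne ω hFbdd α hα hαlim x y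
    CS QS hx1 hQS1 hy hCS hQS hproj
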